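/- For every integer N ≥ 2, the polynomial ν_{N+1} does not belong to the ℂ-subalgebra of R generated by ν₂, ν₃, …, ν_N. In particular, the ℂ-subalgebra of R generated by all the ν_j (j ≥ 2) is not generated by any finite initial collection ν₂, …, ν_N. -/

import Mathlib

/-!
Grade `R` by bidegree (degree in the `z`, degree in the `w`). Then `ν_{k+1}` is bihomogeneous
of bidegree `(k, 1)`, so a product of `r` of the generators `ν₂, …, ν_N` has bidegree `(d, r)`
with `d ≤ (N - 1) r`. The subalgebra they generate therefore has no component of bidegree
`(N, 1)`, which is where `ν_{N+1}` lives; and `ν_{N+1} ≠ 0` as soon as `n ≥ 3`, since at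
`z = e₀`, `w = e₁` it takes the value `-i/4`.
-/

open MvPolynomial Finset

noncomputable section

def Zv (n : ℕ) (j : Fin n) : MvPolynomial (Fin n ⊕ Fin n) ℂ := X (Sum.inl j)

def Wv (n : ℕ) (j : Fin n) : MvPolynomial (Fin n ⊕ Fin n) ℂ := X (Sum.inr j)

/-- The `k`-th normalized harmonic moment. -/
def nu (n : ℕ) [NeZero n] (k : ℕ) : MvPolynomial (Fin n ⊕ Fin n) ℂ :=
  C (Complex.I / 4) *
    ∑ j : Fin n, (Wv n j - Wv n (j + 1)) *
      ∑ m ∈ Finset.range k, Zv n j ^ (k - 1 - m) * Zv n (j + 1) ^ m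

theorem MvPolynomial.weightedHomogeneousComponent_eq_zero_of_mem_adjoin {σ R M : Type*}
    [CommSemiring R] [AddCommMonoid M] {w : σ → M} {A : AddSubmonoid M}
    {s : Set (MvPolynomial σ R)} (hs : ∀ p ∈ s, ∃ m ∈ A, p.IsWeightedHomogeneous w m)
    {p : MvPolynomial σ R} (hp : p ∈ Algebra.adjoin R s) {m : M} (hm : m ∉ A) :
    weightedHomogeneousComponent w m p = 0 := by
  rw [← Subalgebra.mem_toSubmodule, Algebra.adjoin_eq_span] at hp
  induction hp using Submodule.span_induction with
  | mem q hq =>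
    obtain ⟨d, hdA, hd⟩ : ∃ d ∈ A, q.IsWeightedHomogeneous w d := by
      induction hq using Submonoid.closure_induction with
      | mem q hq => exact hs q hq
      | one => exact ⟨0, A.zero_mem, isWeightedHomogeneous_one R w⟩
      | mul q r _ _ hq hr =>
        obtain ⟨d, hdA, hd⟩ := hq
        obtain ⟨e, heA, he⟩ := hr
        exact ⟨d + e, A.add_mem hdA heA, hd.mul he⟩
    exact hd.weightedHomogeneousComponent_ne m fun h => hm (h ▸ hdA)
  | zero => exact map_zero _
  | add q r _ _ hq hr => rw [map_add, hq, hr, add_zero]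
  | smul c q _ hq => rw [map_smul, hq, smul_zero]

def fstLeMulSnd (c : ℕ) : AddSubmonoid (ℕ × ℕ) where
  carrier := {x | x.1 ≤ c * x.2}
  add_mem' {x y} hx hy := by simp only [Set.mem_ofPred_eq, Prod.fst_add, Prod.snd_add] at *; lia
  zero_mem' := by simp

@[simp]
theorem mem_fstLeMulSnd {c : ℕ} {x : ℕ × ℕ} : x ∈ fstLeMulSnd c ↔ x.1 ≤ c * x.2 := Iff.rfl

def bidegree (n : ℕ) : Fin n ⊕ Fin n → ℕ × ℕ := Sum.elim (fun _ => (1, 0)) (fun _ => (0, 1))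

theorem isWeightedHomogeneous_nu (n : ℕ) [NeZero n] (k : ℕ) :
    (nu n (k + 1)).IsWeightedHomogeneous (bidegree n) (k, 1) := by
  have hZ (j : Fin n) : (Zv n j).IsWeightedHomogeneous (bidegree n) (1, 0) :=
    isWeightedHomogeneous_X ℂ _ _
  have hW (j : Fin n) : (Wv n j).IsWeightedHomogeneous (bidegree n) (0, 1) :=
    isWeightedHomogeneous_X ℂ _ _
  refine .C_mul (.sum _ _ _ fun j _ => ?_) _
  have hS : (∑ m ∈ range (k + 1), Zv n j ^ (k + 1 - 1 - m) * Zv n (j + 1) ^ m)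
      |>.IsWeightedHomogeneous (bidegree n) (k, 0) := .sum _ _ _ fun m hm => by
    convert ((hZ j).pow (k + 1 - 1 - m)).mul ((hZ (j + 1)).pow m) using 1
    simp only [Finset.mem_range] at hm
    ext <;> simp; omega
  simpa using ((hW j).sub (hW (j + 1))).mul hS

theorem sum_range_pow_mul_zero_pow {α : Type*} [Semiring α] (a : α) {k : ℕ} (hk : 1 ≤ k) :
    ∑ m ∈ range k, a ^ (k - 1 - m) * 0 ^ m = a ^ (k - 1) := by
  obtain ⟨k, rfl⟩ := Nat.exists_eq_add_of_le' hk
  simp [Finset.sum_range_succ']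

theorem Fin.sum_sub_add_one_mul {R : Type*} [CommRing R] {n : ℕ} [NeZero n] (w f : Fin n → R) :
    ∑ j, (w j - w (j + 1)) * f j = ∑ j, w j * (f j - f (j - 1)) := by
  have := Equiv.sum_comp (Equiv.addRight (1 : Fin n)) fun j => w j * f (j - 1)
  simp only [Equiv.coe_addRight, add_sub_cancel_right] at this
  simp only [sub_mul, mul_sub, Finset.sum_sub_distrib, this]

theorem eval_nu (n : ℕ) [NeZero n] (k : ℕ) (z w : Fin n → ℂ) :
    eval (Sum.elim z w) (nu n k) = Complex.I / 4 * ∑ j, (w j - w (j + 1)) *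
      ∑ m ∈ range k, z j ^ (k - 1 - m) * z (j + 1) ^ m := by
  simp [nu, Zv, Wv]

theorem nu_ne_zero {n : ℕ} [NeZero n] (hn : 3 ≤ n) {k : ℕ} (hk : 2 ≤ k) : nu n k ≠ 0 := by
  have h1 : (1 : Fin n) ≠ 0 := by
    simp [Fin.ext_iff, Nat.mod_eq_of_lt (by omega : 1 < n)]
  have h2 : (1 + 1 : Fin n) ≠ 0 := by
    simp [Fin.ext_iff, Fin.val_add, Nat.mod_eq_of_lt (by omega : 1 < n),
      Nat.mod_eq_of_lt (by omega : 2 < n)]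
  intro h
  have := congrArg (eval (Sum.elim (Pi.single 0 1) (Pi.single 1 1))) h
  rw [eval_nu, Fin.sum_sub_add_one_mul] at this
  simp [Pi.single_apply, h1, h2, sum_range_pow_mul_zero_pow (0 : ℂ) (by omega : 1 ≤ k),
    show k ≠ 0 by omega, show k - 1 ≠ 0 by omega] at this

theorem statement6 (n : ℕ) [NeZero n] (hn : 3 ≤ n) (N : ℕ) (hN : 2 ≤ N) :
    nu n (N + 1) ∉
      Algebra.adjoin ℂ {x : MvPolynomial (Fin n ⊕ Fin n) ℂ |
        ∃ k, 2 ≤ k ∧ k ≤ N ∧ x = nu n k} := by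
  intro hmem
  have hgen : ∀ p ∈ {x | ∃ k, 2 ≤ k ∧ k ≤ N ∧ x = nu n k},
      ∃ d ∈ fstLeMulSnd (N - 1), p.IsWeightedHomogeneous (bidegree n) d := by
    rintro _ ⟨k, hk, hkN, rfl⟩
    obtain ⟨k, rfl⟩ := Nat.exists_eq_add_of_le' (by omega : 1 ≤ k)
    exact ⟨(k, 1), by simp; omega, isWeightedHomogeneous_nu n k⟩
  have hcomp := weightedHomogeneousComponent_eq_zero_of_mem_adjoin hgen hmem
    (m := (N, 1)) (by simp; omega)
  rw [(isWeightedHomogeneous_nu n N).weightedHomogeneousComponent_same] at hcomp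
  exact nu_ne_zero hn (by omega) hcomp
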